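/- arXiv:2605.13787 — 7 statements merged into one kernel-verified Lean document; each statement's English description precedes it below -/
import Mathlib

section
/- Let (Ω, 𝒜, σ) be a probability space, Φ : ℝ → ℝ a smooth strictly convex function, and f : Ω → ℝ a σ-integrable function. Then the Φ-entropy Ent_Φ^σ(f) := ∫Φ(f)dσ − Φ(∫f dσ) equals the infimum over a ∈ ℝ of ∫ D_Φ(f, a) dσ, where D_Φ(x,y) = Φ(x) − Φ(y) − Φ'(y)(x−y) is the Bregman divergence. Moreover, the infimum is attained at a = ∫ f dσ. -/
open MeasureTheory

lemma tangent_le {Φ : ℝ → ℝ} (hc : ConvexOn ℝ Set.univ Φ)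
    (hd : Differentiable ℝ Φ) (a m : ℝ) :
    Φ a + deriv Φ a * (m - a) ≤ Φ m := by
  rcases lt_trichotomy a m with h | h | h
  · have H := hc.deriv_le_slope (Set.mem_univ a) (Set.mem_univ m) h (hd a)
    have h' : 0 < m - a := by linarith
    have H' : deriv Φ a ≤ (Φ m - Φ a) / (m - a) := by
      simpa [slope, vsub_eq_sub, div_eq_inv_mul] using H
    rw [le_div_iff₀ h'] at H'
    nlinarith
  · simp [h]
  · have H := hc.slope_le_deriv (Set.mem_univ m) (Set.mem_univ a) h (hd a)
    have h' : 0 < a - m := by linarith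
    have H' : (Φ a - Φ m) / (a - m) ≤ deriv Φ a := by
      simpa [slope, vsub_eq_sub, div_eq_inv_mul] using H
    rw [div_le_iff₀ h'] at H'
    nlinarith

/-- The Φ-entropy of f equals the infimum over a ∈ ℝ of the integrated Bregman
divergence ∫ D_Φ(f, a) dσ, and the infimum is attained at a = ∫ f dσ. -/
theorem stmt_0 {Ω : Type*} [MeasurableSpace Ω] (σ : Measure Ω) [IsProbabilityMeasure σ]
    (Φ : ℝ → ℝ) (hΦ : ContDiff ℝ 2 Φ) (hΦ'' : ∀ x : ℝ, 0 < deriv (deriv Φ) x)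
    (f : Ω → ℝ) (hf : Integrable f σ) (hΦf : Integrable (fun ω => Φ (f ω)) σ) :
    IsLeast {y : ℝ | ∃ a : ℝ,
        y = ∫ ω, (Φ (f ω) - Φ a - deriv Φ a * (f ω - a)) ∂σ}
      ((∫ ω, Φ (f ω) ∂σ) - Φ (∫ ω, f ω ∂σ)) ∧
    (∫ ω, Φ (f ω) ∂σ) - Φ (∫ ω, f ω ∂σ) =
      ∫ ω, (Φ (f ω) - Φ (∫ x, f x ∂σ)
        - deriv Φ (∫ x, f x ∂σ) * (f ω - ∫ x, f x ∂σ)) ∂σ := by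
  have hd : Differentiable ℝ Φ := hΦ.differentiable (by norm_num)
  have hconv : ConvexOn ℝ Set.univ Φ := by
    apply convexOn_of_deriv2_nonneg convex_univ hΦ.continuous.continuousOn
      hd.differentiableOn
    · exact ((hΦ.iterate_deriv' 1 1).differentiable (by norm_num)).differentiableOn
    · exact fun x _ => (hΦ'' x).le
  -- integral computation for general a
  have key : ∀ a : ℝ, ∫ ω, (Φ (f ω) - Φ a - deriv Φ a * (f ω - a)) ∂σ
      = (∫ ω, Φ (f ω) ∂σ) - Φ a - deriv Φ a * ((∫ ω, f ω ∂σ) - a) := by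
    intro a
    have h1 : Integrable (fun ω => Φ a + deriv Φ a * (f ω - a)) σ :=
      (integrable_const _).add (((hf.sub (integrable_const _)).const_mul _))
    have : ∀ ω, Φ (f ω) - Φ a - deriv Φ a * (f ω - a)
        = Φ (f ω) - (Φ a + deriv Φ a * (f ω - a)) := by intro ω; ring
    simp_rw [this]
    rw [integral_sub hΦf h1]
    have hI : ∫ ω, (Φ a + deriv Φ a * (f ω - a)) ∂σ
        = Φ a + deriv Φ a * ((∫ ω, f ω ∂σ) - a) := by
      have hint : Integrable (fun ω => deriv Φ a * (f ω - a)) σ :=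
        (hf.sub (integrable_const _)).const_mul _
      rw [integral_add (integrable_const _) hint,
        integral_const_mul, integral_sub hf (integrable_const _)]
      simp
    rw [hI]; ring
  set m := ∫ ω, f ω ∂σ
  have hattain : (∫ ω, Φ (f ω) ∂σ) - Φ m
      = ∫ ω, (Φ (f ω) - Φ m - deriv Φ m * (f ω - m)) ∂σ := by
    rw [key m]; simp
  refine ⟨⟨⟨m, hattain⟩, ?_⟩, hattain⟩
  rintro y ⟨a, rfl⟩
  rw [key a]
  have := tangent_le hconv hd a m
  linarith
end

section
/- Define F : ℝ × ℝ → ℝ by F(x,y) = e^x − e^y − e^y(x − y). Then for all x₁, x₂, y₁, y₂ ∈ ℝ: F(min(x₁,x₂), min(y₁,y₂)) ≤ max(F(x₁,y₁), F(x₂,y₂)). -/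
/-- Bregman divergence of the exponential function. -/
noncomputable def bregF (x y : ℝ) : ℝ := Real.exp x - Real.exp y - Real.exp y * (x - y)

lemma bregF_mono_x {y a b : ℝ} (hy : y ≤ a) (hab : a ≤ b) : bregF a y ≤ bregF b y := by
  unfold bregF
  have h1 : Real.exp a * (b - a + 1) ≤ Real.exp b := by
    have := Real.add_one_le_exp (b - a)
    have h2 : Real.exp a * Real.exp (b - a) = Real.exp b := by
      rw [← Real.exp_add]; ring_nf
    nlinarith [Real.exp_pos a]
  have h3 : Real.exp y ≤ Real.exp a := Real.exp_le_exp.mpr hy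
  nlinarith [Real.exp_pos y]

lemma bregF_anti_y {x y y' : ℝ} (hx : x ≤ y) (hyy : y ≤ y') : bregF x y ≤ bregF x y' := by
  unfold bregF
  -- need: exp y' * (1 + x - y') ≤ exp y * (1 + x - y)
  set t := y' - x - (y - x) with ht
  have h2 : Real.exp y * Real.exp (y' - y) = Real.exp y' := by
    rw [← Real.exp_add]; ring_nf
  have h3 : Real.exp (y' - y) * (1 - (y' - y)) ≤ 1 := by
    have := Real.add_one_le_exp (y - y')
    have h4 : Real.exp (y' - y) * Real.exp (y - y') = 1 := by
      rw [← Real.exp_add]; simp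
    nlinarith [Real.exp_pos (y' - y)]
  have h5 : (1 : ℝ) ≤ Real.exp (y' - y) := by
    have := Real.add_one_le_exp (y' - y); linarith
  nlinarith [Real.exp_pos y, Real.exp_pos (y' - y), mul_nonneg (sub_nonneg.2 hx) (sub_nonneg.2 h5)]

theorem stmt_1 (x₁ x₂ y₁ y₂ : ℝ) :
    bregF (min x₁ x₂) (min y₁ y₂) ≤ max (bregF x₁ y₁) (bregF x₂ y₂) := by
  rcases min_cases x₁ x₂ with ⟨hx, hx2⟩ | ⟨hx, hx2⟩ <;>
    rcases min_cases y₁ y₂ with ⟨hy, hy2⟩ | ⟨hy, hy2⟩ <;> rw [hx, hy]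
  · exact le_max_of_le_left le_rfl
  · -- x₁ ≤ x₂, y₂ ≤ y₁
    rcases le_total x₁ y₂ with h | h
    · exact le_max_of_le_left (bregF_anti_y h hy2.le)
    · exact le_max_of_le_right (bregF_mono_x h hx2)
  · -- x₂ ≤ x₁, y₁ ≤ y₂
    rcases le_total x₂ y₁ with h | h
    · exact le_max_of_le_right (bregF_anti_y h hy2)
    · exact le_max_of_le_left (bregF_mono_x h hx2.le)
  · exact le_max_of_le_right le_rfl
end

section
/- Define F : ℝ × ℝ → ℝ by F(x,y) = e^x − e^y − e^y(x − y). Then for all x₁, x₂, y₁, y₂ ∈ ℝ: F(max(x₁,x₂), max(y₁,y₂)) ≤ max(F(x₁,y₁), F(x₂,y₂)). -/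
lemma bregF_key (x₁ x₂ y₁ y₂ : ℝ) (hx : x₂ ≤ x₁) (hy : y₁ ≤ y₂) :
    bregF x₁ y₂ ≤ max (bregF x₁ y₁) (bregF x₂ y₂) := by
  rcases le_total y₂ x₁ with h | h
  · refine le_max_of_le_left ?_
    unfold bregF
    have h1 : Real.exp y₂ = Real.exp y₁ * Real.exp (y₂ - y₁) := by
      rw [← Real.exp_add]; ring_nf
    have h2 : (y₂ - y₁) + 1 ≤ Real.exp (y₂ - y₁) := Real.add_one_le_exp _
    have h3 : (0:ℝ) < Real.exp y₁ := Real.exp_pos _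
    have h5 : Real.exp y₁ * (y₂ - y₁ + 1) ≤ Real.exp y₂ := by
      rw [h1]; nlinarith
    nlinarith [mul_le_mul_of_nonneg_right h5 (by linarith : (0:ℝ) ≤ 1 + (x₁ - y₂)),
      mul_nonneg (mul_nonneg h3.le (sub_nonneg.2 hy)) (sub_nonneg.2 h)]
  · refine le_max_of_le_right ?_
    unfold bregF
    have h1 : Real.exp x₂ = Real.exp x₁ * Real.exp (x₂ - x₁) := by
      rw [← Real.exp_add]; ring_nf
    have h2 : (x₂ - x₁) + 1 ≤ Real.exp (x₂ - x₁) := Real.add_one_le_exp _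
    have h3 : Real.exp x₁ ≤ Real.exp y₂ := Real.exp_le_exp.2 h
    have h4 : (0:ℝ) < Real.exp x₁ := Real.exp_pos _
    nlinarith [mul_nonneg (sub_nonneg.2 h3) (sub_nonneg.2 hx)]

theorem stmt_2 (x₁ x₂ y₁ y₂ : ℝ) :
    bregF (max x₁ x₂) (max y₁ y₂) ≤ max (bregF x₁ y₁) (bregF x₂ y₂) := by
  rcases le_total x₂ x₁ with hx | hx <;> rcases le_total y₁ y₂ with hy | hy
  · rw [max_eq_left hx, max_eq_right hy]
    exact bregF_key x₁ x₂ y₁ y₂ hx hy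
  · rw [max_eq_left hx, max_eq_left hy]
    exact le_max_left _ _
  · rw [max_eq_right hx, max_eq_right hy]
    exact le_max_right _ _
  · rw [max_eq_right hx, max_eq_left hy, max_comm]
    exact bregF_key x₂ x₁ y₂ y₁ hx hy
end

section
/- Let g : ℝ → ℝ be defined by g(x) = x for x ≥ 0 and g(x) = 2x for x ≤ 0, and let F(x,y) = e^x − e^y − e^y(x−y). Then F(g(x), g(y)) ≤ 4 F(x, y) for all x, y ∈ ℝ. -/
/-- The piecewise linear cut-off function: g(x) = x for x ≥ 0, g(x) = 2x for x ≤ 0. -/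
noncomputable def cutg (x : ℝ) : ℝ := if 0 ≤ x then x else 2 * x

/-!
The divergence is translation-covariant, `F(x, y) = e^y F(x - y, 0) = e^x F(0, y - x)`, so
for `x, y ≤ 0` the claim reduces (using `e^{2c} ≤ e^c` for `c ≤ 0`) to the one-variable
inequalities `F(2t, 0) ≤ 4 F(t, 0)` and `F(0, 2t) ≤ 4 F(0, t)` for `t ≤ 0`. Both follow because
`4 F(t, 0) - F(2t, 0)` and `4 F(0, t) - F(0, 2t)` vanish at `0` and are antitone: their
derivatives are `-2 (eᵗ - 1)²` and `4 t eᵗ (1 - eᵗ)`. When `x` and `y` have opposite signs,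
`4 F(x, y) - F(g x, g y)` is one of these one-variable defects plus manifestly nonnegative terms.
-/

open Real

lemma bregF_eq_exp_mul_bregF_sub_zero (x y : ℝ) : bregF x y = exp y * bregF (x - y) 0 := by
  simp only [bregF, exp_zero, exp_sub]
  field_simp
  ring

lemma bregF_eq_exp_mul_bregF_zero_sub (x y : ℝ) : bregF x y = exp x * bregF 0 (y - x) := by
  simp only [bregF, exp_zero, exp_sub]
  field_simp
  ring

lemma bregF_nonneg (x y : ℝ) : 0 ≤ bregF x y := by
  rw [bregF_eq_exp_mul_bregF_sub_zero]
  refine mul_nonneg (exp_pos y).le ?_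
  simp only [bregF, exp_zero]
  linarith [add_one_le_exp (x - y)]

lemma hasDerivAt_bregF_left (x y : ℝ) :
    HasDerivAt (fun x => bregF x y) (exp x - exp y) x := by
  have := ((hasDerivAt_exp x).sub_const (exp y)).sub
    (((hasDerivAt_id' x).sub_const y).const_mul (exp y))
  exact this.congr_deriv (by ring)

lemma hasDerivAt_bregF_right (x y : ℝ) : HasDerivAt (bregF x) (exp y * (y - x)) y := by
  have := ((hasDerivAt_exp y).const_sub (exp x)).sub
    ((hasDerivAt_exp y).mul ((hasDerivAt_id' y).const_sub x))
  exact this.congr_deriv (by ring)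

lemma bregF_two_mul_zero_le {t : ℝ} (ht : t ≤ 0) : bregF (2 * t) 0 ≤ 4 * bregF t 0 := by
  have hderiv (t : ℝ) : HasDerivAt (fun t => 4 * bregF t 0 - bregF (2 * t) 0)
      (-2 * (exp t - 1) ^ 2) t := by
    have h2 := (hasDerivAt_bregF_left (2 * t) 0).comp t ((hasDerivAt_id' t).const_mul 2)
    refine (((hasDerivAt_bregF_left t 0).const_mul 4).sub h2).congr_deriv ?_
    simp only [two_mul, exp_add, exp_zero]
    ring
  have hanti := antitone_of_hasDerivAt_nonpos hderiv fun t => by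
    show -2 * (exp t - 1) ^ 2 ≤ 0
    nlinarith [sq_nonneg (exp t - 1)]
  have := hanti ht
  simp only [mul_zero, bregF, exp_zero] at this ⊢
  linarith

lemma bregF_zero_two_mul_le {t : ℝ} (ht : t ≤ 0) : bregF 0 (2 * t) ≤ 4 * bregF 0 t := by
  have hderiv (t : ℝ) : HasDerivAt (fun t => 4 * bregF 0 t - bregF 0 (2 * t))
      (4 * t * exp t * (1 - exp t)) t := by
    have h2 := (hasDerivAt_bregF_right 0 (2 * t)).comp t ((hasDerivAt_id' t).const_mul 2)
    refine (((hasDerivAt_bregF_right 0 t).const_mul 4).sub h2).congr_deriv ?_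
    simp only [two_mul, exp_add]
    ring
  have hanti := antitone_of_hasDerivAt_nonpos hderiv fun t => by
    show 4 * t * exp t * (1 - exp t) ≤ 0
    rcases le_total t 0 with h | h
    · exact mul_nonpos_of_nonpos_of_nonneg (by nlinarith [exp_pos t])
        (sub_nonneg.2 (exp_le_one_iff.2 h))
    · exact mul_nonpos_of_nonneg_of_nonpos (by positivity)
        (sub_nonpos.2 (one_le_exp_iff.2 h))
  have := hanti ht
  simp only [mul_zero, bregF, exp_zero] at this ⊢
  linarith

lemma bregF_two_mul_two_mul_le {x y : ℝ} (hx : x ≤ 0) (hy : y ≤ 0) :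
    bregF (2 * x) (2 * y) ≤ 4 * bregF x y := by
  rcases le_total x y with hxy | hyx
  · rw [bregF_eq_exp_mul_bregF_sub_zero, bregF_eq_exp_mul_bregF_sub_zero x,
      ← mul_sub, mul_left_comm]
    calc exp (2 * y) * bregF (2 * (x - y)) 0
        ≤ exp y * bregF (2 * (x - y)) 0 :=
          mul_le_mul_of_nonneg_right (exp_le_exp.2 (by linarith)) (bregF_nonneg _ _)
      _ ≤ exp y * (4 * bregF (x - y) 0) :=
          mul_le_mul_of_nonneg_left (bregF_two_mul_zero_le (by linarith)) (exp_pos y).le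
  · rw [bregF_eq_exp_mul_bregF_zero_sub, bregF_eq_exp_mul_bregF_zero_sub x,
      ← mul_sub, mul_left_comm]
    calc exp (2 * x) * bregF 0 (2 * (y - x))
        ≤ exp x * bregF 0 (2 * (y - x)) :=
          mul_le_mul_of_nonneg_right (exp_le_exp.2 (by linarith)) (bregF_nonneg _ _)
      _ ≤ exp x * (4 * bregF 0 (y - x)) :=
          mul_le_mul_of_nonneg_left (bregF_zero_two_mul_le (by linarith)) (exp_pos x).le

lemma bregF_two_mul_left_le {x y : ℝ} (hx : x ≤ 0) (hy : 0 ≤ y) :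
    bregF (2 * x) y ≤ 4 * bregF x y := by
  have key : 4 * bregF x y - bregF (2 * x) y
      = (4 * bregF x 0 - bregF (2 * x) 0) + 3 * bregF 0 y + 2 * -x * (exp y - 1) := by
    simp only [bregF, exp_zero]
    ring
  have hrest : 0 ≤ 2 * -x * (exp y - 1) :=
    mul_nonneg (by linarith) (sub_nonneg.2 (one_le_exp_iff.2 hy))
  linarith [bregF_two_mul_zero_le hx, bregF_nonneg 0 y]

lemma bregF_two_mul_right_le {x y : ℝ} (hx : 0 ≤ x) (hy : y ≤ 0) :
    bregF x (2 * y) ≤ 4 * bregF x y := by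
  have key : 4 * bregF x y - bregF x (2 * y)
      = (4 * bregF 0 y - bregF 0 (2 * y)) + 3 * bregF x 0 + x * ((1 - exp y) * (3 - exp y)) := by
    simp only [bregF, exp_zero, two_mul, exp_add]
    ring
  have hey := exp_le_one_iff.2 hy
  have hrest : 0 ≤ x * ((1 - exp y) * (3 - exp y)) :=
    mul_nonneg hx (mul_nonneg (by linarith) (by linarith))
  linarith [bregF_zero_two_mul_le hy, bregF_nonneg x 0]

theorem stmt_3 (x y : ℝ) : bregF (cutg x) (cutg y) ≤ 4 * bregF x y := by
  unfold cutg
  split_ifs with hx hy hy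
  · linarith [bregF_nonneg x y]
  · exact bregF_two_mul_right_le hx (not_le.1 hy).le
  · exact bregF_two_mul_left_le (not_le.1 hx).le hy
  · exact bregF_two_mul_two_mul_le (not_le.1 hx).le (not_le.1 hy).le
end

section
/- Let (Ω, 𝒜, σ) be a probability space and let f, g ∈ L²(σ) with σ({|fg| = 0}) = 0, and assume log|f|² and log|g|² are σ-integrable. Define ℰ(h) := ∫|h|² dσ − exp(∫ log|h|² dσ). Then ℰ(f ∧ g) ≤ ℰ(f) + ℰ(g), where |f ∧ g| = min(|f|, |g|). -/
open MeasureTheory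

/-- The entropy functional ℰ(h) = ∫|h|² dσ − exp(∫ log|h|² dσ). -/
noncomputable def entE {Ω : Type*} [MeasurableSpace Ω] (σ : Measure Ω) (h : Ω → ℝ) : ℝ :=
  (∫ ω, |h ω| ^ 2 ∂σ) - Real.exp (∫ ω, Real.log (|h ω| ^ 2) ∂σ)

theorem stmt_5 {Ω : Type*} [MeasurableSpace Ω] (σ : Measure Ω) [IsProbabilityMeasure σ]
    (f g : Ω → ℝ) (hfm : Measurable f) (hgm : Measurable g)
    (hf2 : Integrable (fun ω => |f ω| ^ 2) σ) (hg2 : Integrable (fun ω => |g ω| ^ 2) σ)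
    (h0 : σ {ω | f ω * g ω = 0} = 0)
    (hlf : Integrable (fun ω => Real.log (|f ω| ^ 2)) σ)
    (hlg : Integrable (fun ω => Real.log (|g ω| ^ 2)) σ) :
    entE σ (fun ω => min |f ω| |g ω|) ≤ entE σ f + entE σ g := by
  -- a.e. nonvanishing
  have hae : ∀ᵐ ω ∂σ, f ω ≠ 0 ∧ g ω ≠ 0 := by
    have h : ∀ᵐ ω ∂σ, ¬ (f ω * g ω = 0) := by
      rw [ae_iff]; simpa only [not_not] using h0
    filter_upwards [h] with ω hω
    exact ⟨fun h1 => hω (by rw [h1]; ring), fun h1 => hω (by rw [h1]; ring)⟩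
  set m : Ω → ℝ := fun ω => min |f ω| |g ω| with hm
  set M : Ω → ℝ := fun ω => max |f ω| |g ω| with hM
  have hmm : Measurable m := hfm.abs.min hgm.abs
  have hMm : Measurable M := hfm.abs.max hgm.abs
  have hmnn : ∀ ω, 0 ≤ m ω := fun ω => le_min (abs_nonneg _) (abs_nonneg _)
  have hMnn : ∀ ω, 0 ≤ M ω := fun ω => le_max_of_le_left (abs_nonneg _)
  have habs : ∀ ω, |m ω| = m ω := fun ω => abs_of_nonneg (hmnn ω)
  have habsM : ∀ ω, |M ω| = M ω := fun ω => abs_of_nonneg (hMnn ω)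
  -- integrability of m², M²
  have hm2 : Integrable (fun ω => |m ω| ^ 2) σ := by
    refine hf2.mono ((hmm.abs.pow_const 2).aestronglyMeasurable) ?_
    filter_upwards with ω
    simp only [Real.norm_eq_abs, abs_pow, abs_abs, habs]
    exact pow_le_pow_left₀ (hmnn ω) (min_le_left _ _) 2
  have hM2 : Integrable (fun ω => |M ω| ^ 2) σ := by
    refine (hf2.add hg2).mono ((hMm.abs.pow_const 2).aestronglyMeasurable) ?_
    filter_upwards with ω
    simp only [Real.norm_eq_abs, abs_pow, abs_abs, habsM, Pi.add_apply]
    rw [abs_of_nonneg (by positivity : (0:ℝ) ≤ |f ω| ^ 2 + |g ω| ^ 2)]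
    rcases max_cases |f ω| |g ω| with ⟨h1, _⟩ | ⟨h1, _⟩ <;> rw [hM] <;>
      simp only [h1] <;> nlinarith [sq_nonneg (f ω), sq_nonneg (g ω), sq_abs (f ω), sq_abs (g ω)]
  -- (m, M) is pointwise a permutation of (|f|, |g|)
  have hperm : ∀ ω, (m ω = |f ω| ∧ M ω = |g ω|) ∨ (m ω = |g ω| ∧ M ω = |f ω|) := by
    intro ω
    rcases le_total |f ω| |g ω| with h | h
    · exact Or.inl ⟨min_eq_left h, max_eq_right h⟩
    · exact Or.inr ⟨min_eq_right h, max_eq_left h⟩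
  -- integrability of log m², log M²
  have hlogbound : ∀ (u : Ω → ℝ), (∀ ω, (u ω = |f ω| ∨ u ω = |g ω|)) → Measurable u →
      Integrable (fun ω => Real.log (|u ω| ^ 2)) σ := by
    intro u hu hum
    refine (hlf.abs.add hlg.abs).mono
      ((hum.abs.pow_const 2).log.aestronglyMeasurable) ?_
    filter_upwards with ω
    simp only [Real.norm_eq_abs, Pi.add_apply]
    rw [abs_of_nonneg (by positivity : (0:ℝ) ≤ |Real.log (|f ω| ^ 2)| + |Real.log (|g ω| ^ 2)|)]
    rcases hu ω with h | h <;> rw [h, abs_abs]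
    · exact le_add_of_le_of_nonneg le_rfl (abs_nonneg _)
    · exact le_add_of_nonneg_of_le (abs_nonneg _) le_rfl
  have hlm : Integrable (fun ω => Real.log (|m ω| ^ 2)) σ :=
    hlogbound m (fun ω => (hperm ω).imp And.left And.left) hmm
  have hlM : Integrable (fun ω => Real.log (|M ω| ^ 2)) σ :=
    hlogbound M (fun ω => ((hperm ω).imp And.right And.right).symm) hMm
  -- sum identities
  have hsum2 : (∫ ω, |m ω| ^ 2 ∂σ) + (∫ ω, |M ω| ^ 2 ∂σ)
      = (∫ ω, |f ω| ^ 2 ∂σ) + (∫ ω, |g ω| ^ 2 ∂σ) := by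
    rw [← integral_add hm2 hM2, ← integral_add hf2 hg2]
    refine integral_congr_ae (Filter.Eventually.of_forall fun ω => ?_)
    show |m ω| ^ 2 + |M ω| ^ 2 = |f ω| ^ 2 + |g ω| ^ 2
    rcases hperm ω with ⟨h1, h2⟩ | ⟨h1, h2⟩ <;> rw [h1, h2, abs_abs, abs_abs] <;> ring
  have hsuml : (∫ ω, Real.log (|m ω| ^ 2) ∂σ) + (∫ ω, Real.log (|M ω| ^ 2) ∂σ)
      = (∫ ω, Real.log (|f ω| ^ 2) ∂σ) + (∫ ω, Real.log (|g ω| ^ 2) ∂σ) := by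
    rw [← integral_add hlm hlM, ← integral_add hlf hlg]
    refine integral_congr_ae (Filter.Eventually.of_forall fun ω => ?_)
    show Real.log (|m ω| ^ 2) + Real.log (|M ω| ^ 2)
        = Real.log (|f ω| ^ 2) + Real.log (|g ω| ^ 2)
    rcases hperm ω with ⟨h1, h2⟩ | ⟨h1, h2⟩ <;> rw [h1, h2, abs_abs, abs_abs] <;> ring
  set A := ∫ ω, Real.log (|f ω| ^ 2) ∂σ with hA
  set B := ∫ ω, Real.log (|g ω| ^ 2) ∂σ with hB
  set C := ∫ ω, Real.log (|M ω| ^ 2) ∂σ with hC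
  -- C ≥ A and C ≥ B
  have hCA : A ≤ C := by
    refine integral_mono_ae hlf hlM ?_
    filter_upwards [hae] with ω ⟨hf0, _⟩
    refine Real.log_le_log (by positivity) ?_
    rw [habsM]
    exact pow_le_pow_left₀ (abs_nonneg _) (le_max_left _ _) 2
  have hCB : B ≤ C := by
    refine integral_mono_ae hlg hlM ?_
    filter_upwards [hae] with ω ⟨_, hg0⟩
    refine Real.log_le_log (by positivity) ?_
    rw [habsM]
    exact pow_le_pow_left₀ (abs_nonneg _) (le_max_right _ _) 2
  -- Jensen: exp C ≤ ∫ M²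
  have hjensen : Real.exp C ≤ ∫ ω, |M ω| ^ 2 ∂σ := by
    have hM0 : ∀ᵐ ω ∂σ, (0:ℝ) < |M ω| ^ 2 := by
      filter_upwards [hae] with ω ⟨hf0, _⟩
      have h1 : 0 < M ω := lt_of_lt_of_le (abs_pos.2 hf0) (le_max_left _ _)
      rw [habsM]; positivity
    have hexpint : Integrable (Real.exp ∘ fun ω => Real.log (|M ω| ^ 2)) σ := by
      refine hM2.congr ?_
      filter_upwards [hM0] with ω hω
      exact (Real.exp_log hω).symm
    have hle := convexOn_exp.map_integral_le (s := Set.univ) (μ := σ)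
      (f := fun ω => Real.log (|M ω| ^ 2))
      (continuousOn_of_forall_continuousAt fun x _ => Real.continuous_exp.continuousAt)
      isClosed_univ (Filter.Eventually.of_forall fun _ => Set.mem_univ _) hlM hexpint
    refine hle.trans (le_of_eq (integral_congr_ae ?_))
    filter_upwards [hM0] with ω hω
    exact Real.exp_log hω
  -- conclude
  have hmint : (∫ ω, |m ω| ^ 2 ∂σ)
      = (∫ ω, |f ω| ^ 2 ∂σ) + (∫ ω, |g ω| ^ 2 ∂σ) - (∫ ω, |M ω| ^ 2 ∂σ) := by
    linarith
  have hmlog : (∫ ω, Real.log (|m ω| ^ 2) ∂σ) = A + B - C := by linarith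
  simp only [entE]
  rw [hmint, hmlog, ← hA, ← hB]
  have h1 : Real.exp A ≤ Real.exp C := Real.exp_le_exp.2 hCA
  have h2 : Real.exp B ≤ Real.exp C := Real.exp_le_exp.2 hCB
  have h3 : Real.exp (A + B - C) * Real.exp C = Real.exp A * Real.exp B := by
    rw [← Real.exp_add, sub_add_cancel, Real.exp_add]
  have h4 : (0:ℝ) < Real.exp C := Real.exp_pos _
  nlinarith [mul_nonneg (sub_nonneg.2 h1) (sub_nonneg.2 h2)]
end

section
/- Let (Ω, 𝒜, σ) be a probability space and let f, g ∈ L²(σ) with σ({|fg| = 0}) = 0, and assume log|f|² and log|g|² are σ-integrable. Define ℰ(h) := ∫|h|² dσ − exp(∫ log|h|² dσ). Then ℰ(f ∨ g) ≤ ℰ(f) + ℰ(g), where |f ∨ g| = max(|f|, |g|). -/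
open MeasureTheory

theorem stmt_6 {Ω : Type*} [MeasurableSpace Ω] (σ : Measure Ω) [IsProbabilityMeasure σ]
    (f g : Ω → ℝ) (hfm : Measurable f) (hgm : Measurable g)
    (hf2 : Integrable (fun ω => |f ω| ^ 2) σ) (hg2 : Integrable (fun ω => |g ω| ^ 2) σ)
    (h0 : σ {ω | f ω * g ω = 0} = 0)
    (hlf : Integrable (fun ω => Real.log (|f ω| ^ 2)) σ)
    (hlg : Integrable (fun ω => Real.log (|g ω| ^ 2)) σ) :
    entE σ (fun ω => max |f ω| |g ω|) ≤ entE σ f + entE σ g := by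
  have hae : ∀ᵐ ω ∂σ, f ω ≠ 0 ∧ g ω ≠ 0 := by
    have h : ∀ᵐ ω ∂σ, f ω * g ω ≠ 0 := by
      rw [ae_iff]; simpa only [not_not] using h0
    filter_upwards [h] with ω hω
    exact mul_ne_zero_iff.1 hω
  -- Notation
  set F : Ω → ℝ := fun ω => |f ω| ^ 2 with hFdef
  set G : Ω → ℝ := fun ω => |g ω| ^ 2 with hGdef
  set X : Ω → ℝ := fun ω => max (F ω) (G ω) with hXdef
  set m : Ω → ℝ := fun ω => min (F ω) (G ω) with hmdef
  -- pointwise: |max |f| |g||^2 = X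
  have habs : ∀ ω, abs (max |f ω| |g ω|) ^ 2 = X ω := by
    intro ω
    have h1 : abs (max |f ω| |g ω|) = max |f ω| |g ω| :=
      abs_of_nonneg (le_trans (abs_nonneg _) (le_max_left _ _))
    rw [h1]
    show _ = max (|f ω| ^ 2) (|g ω| ^ 2)
    rcases le_total |f ω| |g ω| with h | h
    · rw [max_eq_right h, max_eq_right (pow_le_pow_left₀ (abs_nonneg _) h 2)]
    · rw [max_eq_left h, max_eq_left (pow_le_pow_left₀ (abs_nonneg _) h 2)]
  have hFm : Measurable F := (hfm.abs.pow_const 2)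
  have hGm : Measurable G := (hgm.abs.pow_const 2)
  have hXm : Measurable X := hFm.max hGm
  have hmm : Measurable m := hFm.min hGm
  have hFnn : ∀ ω, 0 ≤ F ω := fun ω => by positivity
  have hGnn : ∀ ω, 0 ≤ G ω := fun ω => by positivity
  -- Integrability of X and m
  have hfg : Integrable (fun ω => F ω + G ω) σ := hf2.add hg2
  have hXi : Integrable X σ := by
    refine hfg.mono' hXm.aestronglyMeasurable (ae_of_all _ fun ω => ?_)
    rw [Real.norm_eq_abs, abs_of_nonneg (le_trans (hFnn ω) (le_max_left _ _))]
    exact max_le (le_add_of_nonneg_right (hGnn ω)) (le_add_of_nonneg_left (hFnn ω))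
  have hmi : Integrable m σ := by
    refine hf2.mono' hmm.aestronglyMeasurable (ae_of_all _ fun ω => ?_)
    rw [Real.norm_eq_abs, abs_of_nonneg (le_min (hFnn ω) (hGnn ω))]
    exact min_le_left _ _
  -- a.e. positivity
  have haepos : ∀ᵐ ω ∂σ, 0 < F ω ∧ 0 < G ω := by
    filter_upwards [hae] with ω ⟨hf0, hg0⟩
    exact ⟨by positivity, by positivity⟩
  -- log X integrability
  have hlXae : ∀ᵐ ω ∂σ, Real.log (X ω) = max (Real.log (F ω)) (Real.log (G ω)) := by
    filter_upwards [haepos] with ω ⟨hF0, hG0⟩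
    show Real.log (max (F ω) (G ω)) = _
    rcases le_total (F ω) (G ω) with h | h
    · rw [max_eq_right h, max_eq_right (Real.log_le_log hF0 h)]
    · rw [max_eq_left h, max_eq_left (Real.log_le_log hG0 h)]
  have hlXi : Integrable (fun ω => Real.log (X ω)) σ := by
    refine Integrable.mono' (hlf.abs.add hlg.abs)
      ((Real.measurable_log.comp hXm).aestronglyMeasurable) ?_
    filter_upwards [hlXae] with ω hω
    rw [hω]
    exact (abs_max_le_max_abs_abs).trans (max_le (le_add_of_nonneg_right (abs_nonneg _))
      (le_add_of_nonneg_left (abs_nonneg _)))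
  -- log m a.e. identity
  have hlmae : ∀ᵐ ω ∂σ, Real.log (m ω) = Real.log (F ω) + Real.log (G ω) - Real.log (X ω) := by
    filter_upwards [haepos] with ω ⟨hF0, hG0⟩
    have hmul : m ω * X ω = F ω * G ω := min_mul_max _ _
    have hX0 : 0 < X ω := lt_of_lt_of_le hF0 (le_max_left _ _)
    have hm0 : 0 < m ω := lt_min hF0 hG0
    have := Real.log_mul hm0.ne' hX0.ne'
    rw [hmul, Real.log_mul hF0.ne' hG0.ne'] at this
    linarith
  have hlmi : Integrable (fun ω => Real.log (m ω)) σ := by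
    refine Integrable.congr ((hlf.add hlg).sub hlXi) ?_
    filter_upwards [hlmae] with ω hω
    exact hω.symm
  set A := ∫ ω, Real.log (F ω) ∂σ with hA
  set B := ∫ ω, Real.log (G ω) ∂σ with hB
  set C := ∫ ω, Real.log (X ω) ∂σ with hC
  have hsum : Integrable (fun ω => Real.log (F ω) + Real.log (G ω)) σ := hlf.add hlg
  have hlm_int : ∫ ω, Real.log (m ω) ∂σ = A + B - C := by
    rw [integral_congr_ae hlmae, integral_sub hsum hlXi, integral_add hlf hlg]
  -- C ≥ A and C ≥ B
  have hAC : A ≤ C := by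
    refine integral_mono_ae hlf hlXi ?_
    filter_upwards [haepos] with ω ⟨hF0, _⟩
    exact Real.log_le_log hF0 (le_max_left _ _)
  have hBC : B ≤ C := by
    refine integral_mono_ae hlg hlXi ?_
    filter_upwards [haepos] with ω ⟨_, hG0⟩
    exact Real.log_le_log hG0 (le_max_right _ _)
  -- Jensen: exp (A + B - C) ≤ ∫ m
  have hexpm : Integrable (fun ω => Real.exp (Real.log (m ω))) σ := by
    refine hmi.congr ?_
    filter_upwards [haepos] with ω ⟨hF0, hG0⟩
    exact (Real.exp_log (lt_min hF0 hG0)).symm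
  have hjensen : Real.exp (A + B - C) ≤ ∫ ω, m ω ∂σ := by
    have := convexOn_exp.map_integral_le (μ := σ) (f := fun ω => Real.log (m ω))
      Real.continuous_exp.continuousOn isClosed_univ
      (ae_of_all _ fun _ => Set.mem_univ _) hlmi hexpm
    rw [hlm_int] at this
    refine this.trans (le_of_eq (integral_congr_ae ?_))
    filter_upwards [haepos] with ω ⟨hF0, hG0⟩
    exact Real.exp_log (lt_min hF0 hG0)
  -- ∫ X = ∫ F + ∫ G - ∫ m
  have hXint : ∫ ω, X ω ∂σ = (∫ ω, F ω ∂σ) + (∫ ω, G ω ∂σ) - ∫ ω, m ω ∂σ := by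
    have : ∀ ω, X ω = F ω + G ω - m ω := by
      intro ω
      have := min_add_max (F ω) (G ω)
      simp only [hXdef, hmdef]
      linarith
    rw [integral_congr_ae (ae_of_all _ this), integral_sub hfg hmi,
      integral_add hf2 hg2]
  -- key numeric inequality
  have hkey : Real.exp A + Real.exp B ≤ Real.exp C + Real.exp (A + B - C) := by
    have h1 : Real.exp A ≤ Real.exp C := Real.exp_le_exp.2 hAC
    have h2 : Real.exp B ≤ Real.exp C := Real.exp_le_exp.2 hBC
    have h3 : Real.exp (A + B - C) * Real.exp C = Real.exp A * Real.exp B := by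
      rw [← Real.exp_add, ← Real.exp_add]; ring_nf
    have h4 : (0:ℝ) < Real.exp C := Real.exp_pos _
    nlinarith [mul_nonneg (sub_nonneg.2 h1) (sub_nonneg.2 h2)]
  -- assemble
  simp only [entE]
  have heq1 : (∫ ω, abs (max |f ω| |g ω|) ^ 2 ∂σ) = ∫ ω, X ω ∂σ :=
    integral_congr_ae (ae_of_all _ fun ω => habs ω)
  have heq2 : (∫ ω, Real.log (abs (max |f ω| |g ω|) ^ 2) ∂σ) = C := by
    refine integral_congr_ae (ae_of_all _ fun ω => ?_)
    exact congrArg Real.log (habs ω)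
  rw [heq1, heq2, hXint]
  have := hjensen
  linarith
end

section
/- Let σ be a probability measure on Ω and let f, g be nonnegative measurable functions with f², g², log f², log g² integrable and f, g > 0 a.e. Let A = {g ≤ f}, α = σ(A), β = 1 − α, and assume 0 < α < 1. Then exp(∫ log f² dσ) + exp(∫ log g² dσ) − exp(∫ log (min(f,g))² dσ) ≤ (∫_A f² dσ / α)^α (∫_{A^c} g² dσ / β)^β ≤ ∫_A f² dσ + ∫_{A^c} g² dσ. -/
/-!
Write `u = log f²`, `v = log g²`. Since `min f g` is `g` on `A` and `f` off `A`,
`∫ log (min f g)² = ∫_A v + ∫_{Aᶜ} u`, so the exponents `a = ∫ u`, `b = ∫ v`, `c = ∫ log (min f g)²`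
satisfy `c ≤ a`, `c ≤ b` and `a + b - c = ∫_A u + ∫_{Aᶜ} v`. The elementary bound
`eᵃ + eᵇ - eᶜ ≤ e^(a + b - c)` and Jensen's inequality for `log` on `A` and on `Aᶜ` give the first
inequality; the second is the weighted AM-GM inequality.
-/

open MeasureTheory Real Set

theorem Real.exp_add_exp_sub_exp_le {a b c : ℝ} (hca : c ≤ a) (hcb : c ≤ b) :
    exp a + exp b - exp c ≤ exp (a + b - c) := by
  have hprod : exp (a + b - c) * exp c = exp a * exp b := by
    rw [← exp_add, ← exp_add]; ring_nf
  have hc : 0 < exp c := exp_pos c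
  nlinarith [mul_nonneg (sub_nonneg.2 (exp_le_exp.2 hca)) (sub_nonneg.2 (exp_le_exp.2 hcb))]

section

variable {Ω : Type*} [MeasurableSpace Ω] {μ : Measure Ω}

theorem MeasureTheory.integral_pos_of_ae_pos [NeZero μ] {h : Ω → ℝ}
    (hpos : ∀ᵐ ω ∂μ, 0 < h ω) (hint : Integrable h μ) : 0 < ∫ ω, h ω ∂μ := by
  rw [integral_pos_iff_support_of_nonneg_ae (hpos.mono fun _ hω => hω.le) hint]
  exact pos_iff_ne_zero.2 (frequently_ae_mem_iff.1 (hpos.mono fun _ hω => hω.ne').frequently)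

theorem MeasureTheory.integral_log_le [IsFiniteMeasure μ] [NeZero μ] {h : Ω → ℝ}
    (hpos : ∀ᵐ ω ∂μ, 0 < h ω) (hint : Integrable h μ)
    (hlog : Integrable (fun ω => log (h ω)) μ) :
    ∫ ω, log (h ω) ∂μ ≤ μ.real univ * log ((∫ ω, h ω ∂μ) / μ.real univ) := by
  set m := μ.real univ
  set t := (∫ ω, h ω ∂μ) / m
  have hI : 0 < ∫ ω, h ω ∂μ := integral_pos_of_ae_pos hpos hint
  have ht : 0 < t := div_pos hI measureReal_univ_pos
  -- `ConcaveOn.le_map_average` needs a closed domain, which `Ioi 0` is not; instead integrate the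
  -- tangent line of `log` at the mean value `t`.
  have htangent : ∀ᵐ ω ∂μ, log (h ω) ≤ h ω / t + (log t - 1) := by
    filter_upwards [hpos] with ω hω
    have := log_le_sub_one_of_pos (div_pos hω ht)
    rw [log_div hω.ne' ht.ne'] at this
    linarith
  calc ∫ ω, log (h ω) ∂μ ≤ ∫ ω, (h ω / t + (log t - 1)) ∂μ :=
        integral_mono_ae hlog ((hint.div_const t).add (integrable_const _)) htangent
    _ = m * log t := by
        rw [integral_add (hint.div_const t) (integrable_const _), integral_div, integral_const,
          smul_eq_mul, div_div_cancel₀ hI.ne']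
        ring

theorem MeasureTheory.integral_comp_min (φ : ℝ → ℝ) {f g : Ω → ℝ} (hf : Measurable f)
    (hg : Measurable g) (hφf : Integrable (fun ω => φ (f ω)) μ)
    (hφg : Integrable (fun ω => φ (g ω)) μ) :
    ∫ ω, φ (min (f ω) (g ω)) ∂μ =
      (∫ ω in {ω | g ω ≤ f ω}, φ (g ω) ∂μ) + ∫ ω in {ω | g ω ≤ f ω}ᶜ, φ (f ω) ∂μ := by
  classical
  have hmin : (fun ω => φ (min (f ω) (g ω))) =
      {ω | g ω ≤ f ω}.piecewise (fun ω => φ (g ω)) (fun ω => φ (f ω)) := by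
    funext ω
    by_cases hω : g ω ≤ f ω
    · simp [hω]
    · simp [hω, min_eq_left (not_le.1 hω).le]
  rw [hmin, integral_piecewise (measurableSet_le hg hf) hφg.integrableOn hφf.integrableOn]

theorem MeasureTheory.setIntegral_log_le [IsFiniteMeasure μ] {s : Set Ω} [NeZero (μ s)]
    {h : Ω → ℝ} (hpos : ∀ᵐ ω ∂μ, 0 < h ω) (hint : Integrable h μ)
    (hlog : Integrable (fun ω => log (h ω)) μ) :
    ∫ ω in s, log (h ω) ∂μ ≤ μ.real s * log ((∫ ω in s, h ω ∂μ) / μ.real s) := by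
  simpa only [measureReal_restrict_apply_univ] using
    integral_log_le (μ := μ.restrict s) (ae_restrict_of_ae hpos) hint.restrict hlog.restrict

theorem MeasureTheory.exp_integral_add_exp_integral_sub_exp_integral_min_le {φ : ℝ → ℝ}
    (hφ : MonotoneOn φ (Ioi 0)) {f g : Ω → ℝ} (hf : Measurable f) (hg : Measurable g)
    (hfpos : ∀ᵐ ω ∂μ, 0 < f ω) (hgpos : ∀ᵐ ω ∂μ, 0 < g ω)
    (hφf : Integrable (fun ω => φ (f ω)) μ) (hφg : Integrable (fun ω => φ (g ω)) μ) :
    exp (∫ ω, φ (f ω) ∂μ) + exp (∫ ω, φ (g ω) ∂μ) - exp (∫ ω, φ (min (f ω) (g ω)) ∂μ) ≤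
      exp ((∫ ω in {ω | g ω ≤ f ω}, φ (f ω) ∂μ) + ∫ ω in {ω | g ω ≤ f ω}ᶜ, φ (g ω) ∂μ) := by
  have hA : MeasurableSet {ω | g ω ≤ f ω} := measurableSet_le hg hf
  have hmin := integral_comp_min φ hf hg hφf hφg
  have hle_on : ∫ ω in {ω | g ω ≤ f ω}, φ (g ω) ∂μ ≤ ∫ ω in {ω | g ω ≤ f ω}, φ (f ω) ∂μ :=
    setIntegral_mono_on_ae hφg.integrableOn hφf.integrableOn hA <| by
      filter_upwards [hgpos] with ω hω hωA
      exact hφ hω (hω.trans_le hωA) hωA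
  have hle_off : ∫ ω in {ω | g ω ≤ f ω}ᶜ, φ (f ω) ∂μ ≤ ∫ ω in {ω | g ω ≤ f ω}ᶜ, φ (g ω) ∂μ :=
    setIntegral_mono_on_ae hφf.integrableOn hφg.integrableOn hA.compl <| by
      filter_upwards [hfpos] with ω hω hωAc
      have hfg : f ω < g ω := not_le.1 hωAc
      exact hφ hω (hω.trans hfg) hfg.le
  have hsplit_f := integral_add_compl hA hφf
  have hsplit_g := integral_add_compl hA hφg
  calc _ ≤ exp ((∫ ω, φ (f ω) ∂μ) + (∫ ω, φ (g ω) ∂μ) - ∫ ω, φ (min (f ω) (g ω)) ∂μ) :=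
        exp_add_exp_sub_exp_le (by linarith) (by linarith)
    _ = _ := by congr 1; linarith

end

theorem stmt_18 {Ω : Type*} [MeasurableSpace Ω] (σ : Measure Ω) [IsProbabilityMeasure σ]
    (f g : Ω → ℝ) (hfm : Measurable f) (hgm : Measurable g)
    (hfpos : ∀ᵐ ω ∂σ, 0 < f ω) (hgpos : ∀ᵐ ω ∂σ, 0 < g ω)
    (hf2 : Integrable (fun ω => f ω ^ 2) σ) (hg2 : Integrable (fun ω => g ω ^ 2) σ)
    (hlf : Integrable (fun ω => Real.log (f ω ^ 2)) σ)
    (hlg : Integrable (fun ω => Real.log (g ω ^ 2)) σ)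
    (A : Set Ω) (hAdef : A = {ω | g ω ≤ f ω})
    (α β : ℝ) (hαdef : α = (σ A).toReal) (hβdef : β = 1 - α)
    (hα : 0 < α) (hα1 : α < 1) :
    Real.exp (∫ ω, Real.log (f ω ^ 2) ∂σ) + Real.exp (∫ ω, Real.log (g ω ^ 2) ∂σ)
        - Real.exp (∫ ω, Real.log (min (f ω) (g ω) ^ 2) ∂σ) ≤
      ((∫ ω in A, f ω ^ 2 ∂σ) / α) ^ α * ((∫ ω in Aᶜ, g ω ^ 2 ∂σ) / β) ^ β ∧
    ((∫ ω in A, f ω ^ 2 ∂σ) / α) ^ α * ((∫ ω in Aᶜ, g ω ^ 2 ∂σ) / β) ^ β ≤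
      (∫ ω in A, f ω ^ 2 ∂σ) + ∫ ω in Aᶜ, g ω ^ 2 ∂σ := by
  have hA : MeasurableSet A := hAdef ▸ measurableSet_le hgm hfm
  have hβ : 0 < β := by linarith
  have hσA : σ.real A = α := hαdef.symm
  have hσAc : σ.real Aᶜ = β := by rw [probReal_compl_eq_one_sub hA, hσA, hβdef]
  have : NeZero (σ A) := ⟨(measureReal_ne_zero_iff).1 (hσA ▸ hα.ne')⟩
  have : NeZero (σ Aᶜ) := ⟨(measureReal_ne_zero_iff).1 (hσAc ▸ hβ.ne')⟩
  have hf2pos : ∀ᵐ ω ∂σ, 0 < f ω ^ 2 := hfpos.mono fun _ hω => by positivity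
  have hg2pos : ∀ᵐ ω ∂σ, 0 < g ω ^ 2 := hgpos.mono fun _ hω => by positivity
  set X := ∫ ω in A, f ω ^ 2 ∂σ
  set Y := ∫ ω in Aᶜ, g ω ^ 2 ∂σ
  have hX : 0 < X / α :=
    div_pos (integral_pos_of_ae_pos (ae_restrict_of_ae hf2pos) hf2.restrict) hα
  have hY : 0 < Y / β :=
    div_pos (integral_pos_of_ae_pos (ae_restrict_of_ae hg2pos) hg2.restrict) hβ
  have hJensenA := setIntegral_log_le (s := A) hf2pos hf2 hlf
  have hJensenAc := setIntegral_log_le (s := Aᶜ) hg2pos hg2 hlg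
  rw [hσA] at hJensenA
  rw [hσAc] at hJensenAc
  have hlog_sq : MonotoneOn (fun x : ℝ => log (x ^ 2)) (Ioi 0) :=
    fun x (hx : 0 < x) _ _ hxy => log_le_log (by positivity) (by gcongr)
  refine ⟨?_, ?_⟩
  · calc _ ≤ exp ((∫ ω in A, log (f ω ^ 2) ∂σ) + ∫ ω in Aᶜ, log (g ω ^ 2) ∂σ) := hAdef ▸
          exp_integral_add_exp_integral_sub_exp_integral_min_le hlog_sq hfm hgm hfpos hgpos hlf hlg
      _ ≤ exp (α * log (X / α) + β * log (Y / β)) := exp_le_exp.2 (by linarith)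
      _ = (X / α) ^ α * (Y / β) ^ β := by
          rw [exp_add, rpow_def_of_pos hX, rpow_def_of_pos hY, mul_comm α, mul_comm β]
  · have := geom_mean_le_arith_mean2_weighted hα.le hβ.le hX.le hY.le (by linarith)
    rwa [mul_div_cancel₀ X hα.ne', mul_div_cancel₀ Y hβ.ne'] at this
end
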